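/- With the same setup (R commutative, q ≥ 1, p prime, V : ℤ → R odd with V 0 = 0, X·V(r) = V(r+q) + V(r−q) for 0 ≤ r ≤ (p−1)q), let f : ℕ → ℤ[t] be the Dickson polynomials of the second kind (f 0 = 1, f 1 = t, f(n+2) = t·f(n+1) − f n), with the convention f(−1) = 0. Then for all k ∈ {0, …, p−1} and r ∈ {1, …, q}: V(k·q + r) = (f k).eval X · V(r) + (f (k−1)).eval X · V(q − r). -/
import Mathlib


open Polynomial

noncomputable def f : ℕ → Polynomial ℤ
  | 0 => 1
  | 1 => X
  | n + 2 => X * f (n + 1) - f n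

noncomputable def fI : ℤ → Polynomial ℤ := fun n => if 0 ≤ n then f n.toNat else 0

lemma fI_natCast (m : ℕ) : fI (m : ℤ) = f m := by simp [fI]

lemma aeval_f_two {R : Type*} [CommRing R] (X : R) (n : ℕ) :
    aeval X (f (n + 2)) = X * aeval X (f (n + 1)) - aeval X (f n) := by
  rw [show f (n + 2) = Polynomial.X * f (n + 1) - f n from rfl]
  simp

lemma aeval_f_succ {R : Type*} [CommRing R] (X : R) (n : ℕ) :
    aeval X (f (n + 1)) = X * aeval X (f n) - aeval X (fI ((n : ℤ) - 1)) := by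
  cases n with
  | zero => simp [f, fI]
  | succ m =>
    rw [show ((m + 1 : ℕ) : ℤ) - 1 = ((m : ℕ) : ℤ) by push_cast; ring, fI_natCast,
      aeval_f_two]

theorem stmt_15 {R : Type*} [CommRing R] (p : ℕ) (hp : p.Prime) (q : ℤ) (hq : 1 ≤ q)
    (X : R) (V : ℤ → R) (hV0 : V 0 = 0) (hVodd : ∀ r : ℤ, V (-r) = -V r)
    (hX : ∀ r : ℤ, 0 ≤ r → r ≤ ((p : ℤ) - 1) * q → X * V r = V (r + q) + V (r - q))
    (k : ℕ) (hk : k ≤ p - 1) (r : ℤ) (hr1 : 1 ≤ r) (hrq : r ≤ q) :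
    V ((k : ℤ) * q + r) =
      Polynomial.aeval X (f k) * V r + Polynomial.aeval X (fI ((k : ℤ) - 1)) * V (q - r) := by
  have hp2 : 2 ≤ p := hp.two_le
  have hpZ : (2 : ℤ) ≤ (p : ℤ) := by exact_mod_cast hp2
  induction k using Nat.twoStepInduction with
  | zero => norm_num [f, fI]
  | one =>
    have hb : r ≤ ((p : ℤ) - 1) * q := by nlinarith
    have hXr := hX r (by linarith) hb
    have hodd : V (r - q) = -V (q - r) := by
      rw [show r - q = -(q - r) by ring, hVodd]
    rw [show ((1 : ℕ) : ℤ) * q + r = r + q by push_cast; ring,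
      show ((1 : ℕ) : ℤ) - 1 = ((0 : ℕ) : ℤ) by norm_num, fI_natCast]
    show V (r + q) = aeval X Polynomial.X * V r + aeval X (f 0) * V (q - r)
    rw [show f 0 = 1 from rfl]
    simp only [aeval_X, map_one, one_mul]
    linear_combination -hXr - hodd
  | more n ih1 ih2 =>
    have hn0 : (0 : ℤ) ≤ (n : ℤ) := Int.natCast_nonneg n
    have h3 : n + 3 ≤ p := by omega
    have h3Z : (n : ℤ) + 3 ≤ (p : ℤ) := by exact_mod_cast h3
    have hb : ((n : ℤ) + 1) * q + r ≤ ((p : ℤ) - 1) * q := by nlinarith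
    have h0 : (0 : ℤ) ≤ ((n : ℤ) + 1) * q + r := by nlinarith
    have hX' := hX (((n : ℤ) + 1) * q + r) h0 hb
    rw [show ((n : ℤ) + 1) * q + r + q = ((n : ℤ) + 2) * q + r by ring,
      show ((n : ℤ) + 1) * q + r - q = (n : ℤ) * q + r by ring] at hX'
    have g1 := ih1 (by omega)
    have g2 := ih2 (by omega)
    rw [show ((n + 1 : ℕ) : ℤ) - 1 = ((n : ℕ) : ℤ) by push_cast; ring, fI_natCast,
      show ((n + 1 : ℕ) : ℤ) * q + r = ((n : ℤ) + 1) * q + r by push_cast; ring] at g2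
    rw [show ((n + 2 : ℕ) : ℤ) - 1 = ((n + 1 : ℕ) : ℤ) by push_cast; ring, fI_natCast,
      show ((n + 2 : ℕ) : ℤ) * q + r = ((n : ℤ) + 2) * q + r by push_cast; ring]
    have key2 := aeval_f_two X n
    have key := aeval_f_succ X n
    linear_combination -hX' + X * g2 - g1 - V r * key2 - V (q - r) * key
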